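/- Let S(x) = Σ_{n≥0} s(n)x^n be the generating function for RNA secondary structures with minimum arc-length λ = 2 and minimum stack-length r = 1. Then, as a formal power series identity, x²·S(x)² − ((1−x)(1−x²+x²) + x²)·S(x) + (1−x²+x²) = 0; equivalently x²S(x)² − (1−x+x²)S(x) + 1 = 0. -/

import Mathlib

open Finset

/-- An RNA secondary structure on vertices `{1,…,n}` with minimum arc-length `lam`
and minimum stack-length `r`, given as a finite set of arcs `(i,j)`, `i < j`. -/
def IsSecStr (lam r n : ℕ) (M : Finset (ℕ × ℕ)) : Prop :=
  (∀ p ∈ M, 1 ≤ p.1 ∧ p.1 < p.2 ∧ p.2 ≤ n ∧ lam ≤ p.2 - p.1) ∧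
  (∀ p ∈ M, ∀ q ∈ M, p ≠ q → p.1 ≠ q.1 ∧ p.1 ≠ q.2 ∧ p.2 ≠ q.1 ∧ p.2 ≠ q.2) ∧
  (∀ p ∈ M, ∀ q ∈ M, ¬(p.1 < q.1 ∧ q.1 < p.2 ∧ p.2 < q.2)) ∧
  (∀ p ∈ M, (p.1 - 1, p.2 + 1) ∉ M → ∀ t < r, (p.1 + t, p.2 - t) ∈ M)

/-- Irreducible: a single vertex, or an arc joining the first and last vertex. -/
def IsIrred (lam r n : ℕ) (M : Finset (ℕ × ℕ)) : Prop :=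
  IsSecStr lam r n M ∧ ((n = 1 ∧ M = ∅) ∨ (1, n) ∈ M)

/-- Number of secondary structures on `n` vertices. -/
noncomputable def numStr (lam r n : ℕ) : ℕ := Set.ncard {M | IsSecStr lam r n M}

/-- Number of irreducible secondary structures on `n` vertices. -/
noncomputable def numIrr (lam r n : ℕ) : ℕ := Set.ncard {M | IsIrred lam r n M}

/-- The rainbows of `M`: arcs maximal with respect to the nesting order. -/
def rainbowSet (M : Finset (ℕ × ℕ)) : Finset (ℕ × ℕ) :=
  M.filter (fun p => ∀ q ∈ M, q.1 ≤ p.1 → p.2 ≤ q.2 → q = p)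

/-- Length of the longest rainbow (0 if there is none). -/
def longestRainbow (M : Finset (ℕ × ℕ)) : ℕ := (rainbowSet M).sup (fun p => p.2 - p.1)

/-- The number of rainbows of length `k`. -/
def numRainbows (k : ℕ) (M : Finset (ℕ × ℕ)) : ℕ :=
  ((rainbowSet M).filter (fun p => p.2 - p.1 = k)).card

/-- Probability of an event under the uniform distribution on secondary structures. -/
noncomputable def probEvent (lam r n : ℕ) (A : Finset (ℕ × ℕ) → Prop) : ℝ :=
  (Set.ncard {M | IsSecStr lam r n M ∧ A M} : ℝ) / (Set.ncard {M | IsSecStr lam r n M} : ℝ)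


/-! Classify a structure on `{1,…,n+1}` by its last vertex: either `n+1` is unpaired, leaving a
structure on `{1,…,n}`, or it is paired with some `i+1`, and cutting along that arc leaves a
structure on `{1,…,i}` and one on the `n-1-i` vertices under the arc. For `λ = 2` this gives
`s(m+2) = s(m+1) + ∑_{i<m} s(i) s(m-i)`, which together with `s(0) = s(1) = 1` is the
coefficientwise form of `x²S² − (1−x+x²)S + 1 = 0`. -/

def ArcsCompatible (p q : ℕ × ℕ) : Prop :=
  p = q ∨ p.2 < q.1 ∨ q.2 < p.1 ∨ (p.1 < q.1 ∧ q.2 < p.2) ∨ (q.1 < p.1 ∧ p.2 < q.2)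

section StackLengthOne

variable {lam n m : ℕ} {M A B : Finset (ℕ × ℕ)}

theorem isSecStr_one_iff :
    IsSecStr lam 1 n M ↔
      (∀ p ∈ M, 1 ≤ p.1 ∧ p.1 < p.2 ∧ p.2 ≤ n ∧ lam ≤ p.2 - p.1) ∧
        ∀ p ∈ M, ∀ q ∈ M, ArcsCompatible p q := by
  constructor
  · rintro ⟨harc, hdisj, hcross, -⟩
    refine ⟨harc, fun p hp q hq => ?_⟩
    by_cases hpq : p = q
    · exact Or.inl hpq
    have := hdisj p hp q hq hpq
    have := hcross p hp q hq
    have := hcross q hq p hp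
    have := harc p hp
    have := harc q hq
    right
    omega
  · rintro ⟨harc, hcomp⟩
    refine ⟨harc, fun p hp q hq hpq => ?_, fun p hp q hq => ?_, fun p hp _ t ht => ?_⟩
    · have := harc p hp
      have := harc q hq
      rcases hcomp p hp q hq with h | h
      · exact absurd h hpq
      · omega
    · have := harc p hp
      have := harc q hq
      rcases hcomp p hp q hq with rfl | h <;> omega
    · simpa [Nat.lt_one_iff.mp ht] using hp

theorem IsSecStr.of_subset (h : IsSecStr lam 1 n M) (hAM : A ⊆ M) (hA : ∀ p ∈ A, p.2 ≤ m) :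
    IsSecStr lam 1 m A := by
  rw [isSecStr_one_iff] at h ⊢
  exact ⟨fun p hp => ⟨(h.1 p (hAM hp)).1, (h.1 p (hAM hp)).2.1, hA p hp, (h.1 p (hAM hp)).2.2.2⟩,
    fun p hp q hq => h.2 p (hAM hp) q (hAM hq)⟩

theorem IsSecStr.mono (h : IsSecStr lam 1 m M) (hmn : m ≤ n) : IsSecStr lam 1 n M :=
  h.of_subset subset_rfl fun p hp => ((isSecStr_one_iff.mp h).1 p hp).2.2.1.trans hmn

theorem IsSecStr.union_of_lt (hA : IsSecStr lam 1 n A) (hB : IsSecStr lam 1 n B)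
    (hAB : ∀ p ∈ A, ∀ q ∈ B, p.2 < q.1) : IsSecStr lam 1 n (A ∪ B) := by
  rw [isSecStr_one_iff] at hA hB ⊢
  refine ⟨fun p hp => (mem_union.mp hp).elim (hA.1 p) (hB.1 p), fun p hp q hq => ?_⟩
  rcases mem_union.mp hp with hp | hp <;> rcases mem_union.mp hq with hq | hq
  · exact hA.2 p hp q hq
  · exact Or.inr (Or.inl (hAB p hp q hq))
  · exact Or.inr (Or.inr (Or.inl (hAB q hq p hp)))
  · exact hB.2 p hp q hq

theorem IsSecStr.insert_of_nested (hM : IsSecStr lam 1 n M)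
    {a : ℕ × ℕ} (ha : 1 ≤ a.1 ∧ a.1 < a.2 ∧ a.2 ≤ n ∧ lam ≤ a.2 - a.1)
    (hnest : ∀ p ∈ M, a.1 < p.1 ∧ p.2 < a.2) : IsSecStr lam 1 n (insert a M) := by
  rw [isSecStr_one_iff] at hM ⊢
  refine ⟨forall_mem_insert _ _ _ |>.mpr ⟨ha, hM.1⟩, fun p hp q hq => ?_⟩
  rw [mem_insert] at hp hq
  rcases hp with rfl | hp <;> rcases hq with rfl | hq
  · exact Or.inl rfl
  · exact Or.inr (Or.inr (Or.inr (Or.inl (hnest q hq))))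
  · exact Or.inr (Or.inr (Or.inr (Or.inr (hnest p hp))))
  · exact hM.2 p hp q hq

end StackLengthOne

def shiftArcs (c : ℕ) (M : Finset (ℕ × ℕ)) : Finset (ℕ × ℕ) := M.image fun p => (p.1 + c, p.2 + c)

def unshiftArcs (c : ℕ) (M : Finset (ℕ × ℕ)) : Finset (ℕ × ℕ) := M.image fun p => (p.1 - c, p.2 - c)

section Shift

variable {lam n m c : ℕ} {M : Finset (ℕ × ℕ)}

theorem unshiftArcs_shiftArcs : unshiftArcs c (shiftArcs c M) = M := by
  simp [shiftArcs, unshiftArcs, image_image, Function.comp_def]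

theorem shiftArcs_unshiftArcs (h : ∀ p ∈ M, c ≤ p.1 ∧ c ≤ p.2) :
    shiftArcs c (unshiftArcs c M) = M := by
  rw [shiftArcs, unshiftArcs, image_image]
  conv_rhs => rw [← image_id (s := M)]
  refine image_congr fun p hp => ?_
  have := h p hp
  simp only [Function.comp_apply, id_eq]
  ext <;> omega

theorem isSecStr_shiftArcs (h : IsSecStr lam 1 m M) : IsSecStr lam 1 (m + c) (shiftArcs c M) := by
  rw [isSecStr_one_iff] at h ⊢
  simp only [shiftArcs, forall_mem_image]
  refine ⟨fun p hp => ?_, fun p hp q hq => ?_⟩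
  · have := h.1 p hp
    omega
  · have := h.2 p hp q hq
    simp only [ArcsCompatible, Prod.ext_iff] at this ⊢
    omega

theorem isSecStr_unshiftArcs (h : IsSecStr lam 1 n M) (hM : ∀ p ∈ M, c < p.1 ∧ p.2 ≤ m + c) :
    IsSecStr lam 1 m (unshiftArcs c M) := by
  rw [isSecStr_one_iff] at h ⊢
  simp only [unshiftArcs, forall_mem_image]
  refine ⟨fun p hp => ?_, fun p hp q hq => ?_⟩
  · have := h.1 p hp
    have := hM p hp
    omega
  · have := h.2 p hp q hq
    have := h.1 p hp
    have := h.1 q hq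
    have := hM p hp
    have := hM q hq
    simp only [ArcsCompatible, Prod.ext_iff] at *
    omega

end Shift

def glueArc (i n : ℕ) (A B : Finset (ℕ × ℕ)) : Finset (ℕ × ℕ) :=
  A ∪ insert (i + 1, n + 1) (shiftArcs (i + 1) B)

def splitAtArc (i : ℕ) (M : Finset (ℕ × ℕ)) : Finset (ℕ × ℕ) × Finset (ℕ × ℕ) :=
  (M.filter (·.2 ≤ i), unshiftArcs (i + 1) (M.filter (i + 1 < ·.1)))

section Glue

variable {lam n m i : ℕ} {M A B : Finset (ℕ × ℕ)}

theorem isSecStr_glueArc (hA : IsSecStr lam 1 i A) (hB : IsSecStr lam 1 (n - 1 - i) B)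
    (hi : i < n) (hlam : lam ≤ n - i) : IsSecStr lam 1 (n + 1) (glueArc i n A B) := by
  have hAarcs := (isSecStr_one_iff.mp hA).1
  have hBarcs := (isSecStr_one_iff.mp hB).1
  have hinside : IsSecStr lam 1 (n + 1) (insert (i + 1, n + 1) (shiftArcs (i + 1) B)) := by
    refine ((isSecStr_shiftArcs hB).mono (by omega)).insert_of_nested (by omega) ?_
    simp only [shiftArcs, forall_mem_image]
    intro p hp
    have := hBarcs p hp
    omega
  refine (hA.mono (by omega)).union_of_lt hinside fun p hp q hq => ?_
  have := hAarcs p hp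
  simp only [shiftArcs, mem_insert, mem_image] at hq
  obtain rfl | ⟨q, hq, rfl⟩ := hq <;> omega

theorem splitAtArc_glueArc (hA : IsSecStr lam 1 i A) (hB : IsSecStr lam 1 m B) (hi : i ≤ n) :
    splitAtArc i (glueArc i n A B) = (A, B) := by
  have hAarcs := (isSecStr_one_iff.mp hA).1
  have hBarcs := (isSecStr_one_iff.mp hB).1
  have hleft : (glueArc i n A B).filter (·.2 ≤ i) = A := by
    ext p
    simp only [glueArc, shiftArcs, mem_filter, mem_union, mem_insert, mem_image]
    constructor
    · rintro ⟨hp | rfl | ⟨q, -, rfl⟩, hle⟩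
      · exact hp
      · omega
      · omega
    · exact fun hp => ⟨Or.inl hp, (hAarcs p hp).2.2.1⟩
  have hinside : (glueArc i n A B).filter (i + 1 < ·.1) = shiftArcs (i + 1) B := by
    ext p
    simp only [glueArc, mem_filter, mem_union, mem_insert]
    constructor
    · rintro ⟨hp | rfl | hp, hlt⟩
      · have := hAarcs p hp
        omega
      · omega
      · exact hp
    · intro hp
      refine ⟨Or.inr (Or.inr hp), ?_⟩
      obtain ⟨q, hq, rfl⟩ := mem_image.mp hp
      have := hBarcs q hq
      omega
  simp only [splitAtArc, hleft, hinside, unshiftArcs_shiftArcs]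

theorem IsSecStr.eq_or_le_or_inside (h : IsSecStr lam 1 (n + 1) M) (ha : (i + 1, n + 1) ∈ M)
    {p : ℕ × ℕ} (hp : p ∈ M) : p = (i + 1, n + 1) ∨ p.2 ≤ i ∨ (i + 1 < p.1 ∧ p.2 ≤ n) := by
  rw [isSecStr_one_iff] at h
  have := h.1 p hp
  rcases h.2 p hp _ ha with h | h
  · exact Or.inl h
  · omega

theorem glueArc_splitAtArc (h : IsSecStr lam 1 (n + 1) M) (ha : (i + 1, n + 1) ∈ M) :
    glueArc i n (splitAtArc i M).1 (splitAtArc i M).2 = M := by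
  have hinside : shiftArcs (i + 1) (unshiftArcs (i + 1) (M.filter (i + 1 < ·.1))) =
      M.filter (i + 1 < ·.1) := by
    refine shiftArcs_unshiftArcs fun p hp => ?_
    obtain ⟨hp, hlt⟩ := mem_filter.mp hp
    have := (isSecStr_one_iff.mp h).1 p hp
    omega
  ext p
  simp only [glueArc, splitAtArc, hinside, mem_union, mem_insert, mem_filter]
  constructor
  · rintro (⟨hp, -⟩ | rfl | ⟨hp, -⟩) <;> assumption
  · intro hp
    rcases h.eq_or_le_or_inside ha hp with rfl | hle | hin
    exacts [Or.inr (Or.inl rfl), Or.inl ⟨hp, hle⟩, Or.inr (Or.inr ⟨hp, hin.1⟩)]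

theorem isSecStr_splitAtArc (h : IsSecStr lam 1 (n + 1) M) (ha : (i + 1, n + 1) ∈ M) :
    IsSecStr lam 1 i (splitAtArc i M).1 ∧ IsSecStr lam 1 (n - 1 - i) (splitAtArc i M).2 := by
  have hinside : ∀ p ∈ M.filter (i + 1 < ·.1), i + 1 < p.1 ∧ p.2 ≤ n - 1 - i + (i + 1) := by
    intro p hp
    obtain ⟨hp, hlt⟩ := mem_filter.mp hp
    have := (isSecStr_one_iff.mp h).1 p hp
    rcases h.eq_or_le_or_inside ha hp with rfl | hle | hin
    all_goals omega
  exact ⟨h.of_subset (filter_subset _ _) fun p hp => (mem_filter.mp hp).2,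
    isSecStr_unshiftArcs (h.of_subset (filter_subset _ _) fun p hp => (hinside p hp).2) hinside⟩

end Glue

open scoped Classical in
noncomputable def secStrs (lam r n : ℕ) : Finset (Finset (ℕ × ℕ)) :=
  (range (n + 1) ×ˢ range (n + 1)).powerset.filter (IsSecStr lam r n)

section Counting

variable {lam r n i : ℕ} {M : Finset (ℕ × ℕ)}

theorem mem_secStrs : M ∈ secStrs lam r n ↔ IsSecStr lam r n M := by
  classical
  simp only [secStrs, mem_filter, mem_powerset, and_iff_right_iff_imp]
  intro h p hp
  have := h.1 p hp
  simp only [mem_product, mem_range]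
  omega

theorem numStr_eq_card_secStrs : numStr lam r n = (secStrs lam r n).card := by
  rw [numStr, ← Set.ncard_coe_finset]
  congr
  ext M
  simp [mem_secStrs]

theorem secStrs_zero : secStrs lam r 0 = {∅} := by
  ext M
  rw [mem_secStrs, mem_singleton]
  constructor
  · intro h
    refine eq_empty_of_forall_notMem fun p hp => ?_
    have := h.1 p hp
    omega
  · rintro rfl
    simp [IsSecStr]

theorem card_filter_mem_secStrs (hi : i < n) (hlam : lam ≤ n - i) :
    ((secStrs lam 1 (n + 1)).filter ((i + 1, n + 1) ∈ ·)).card =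
      (secStrs lam 1 i).card * (secStrs lam 1 (n - 1 - i)).card := by
  rw [← card_product]
  refine card_nbij' (splitAtArc i) (fun P => glueArc i n P.1 P.2) ?_ ?_ ?_ ?_
  · intro M hM
    simp only [mem_coe, mem_filter, mem_product, mem_secStrs] at hM ⊢
    exact isSecStr_splitAtArc hM.1 hM.2
  · rintro ⟨A, B⟩ hAB
    simp only [mem_coe, mem_filter, mem_product, mem_secStrs] at hAB ⊢
    exact ⟨isSecStr_glueArc hAB.1 hAB.2 hi hlam, mem_union_right _ (mem_insert_self _ _)⟩
  · intro M hM
    simp only [mem_coe, mem_filter, mem_secStrs] at hM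
    exact glueArc_splitAtArc hM.1 hM.2
  · rintro ⟨A, B⟩ hAB
    simp only [mem_coe, mem_product, mem_secStrs] at hAB
    exact splitAtArc_glueArc hAB.1 hAB.2 hi.le

theorem filter_secStrs_unpaired :
    (secStrs lam 1 (n + 1)).filter (fun M => ∀ p ∈ M, p.2 ≠ n + 1) = secStrs lam 1 n := by
  ext M
  simp only [mem_filter, mem_secStrs]
  refine ⟨fun ⟨h, hfree⟩ => h.of_subset subset_rfl fun p hp => ?_,
    fun h => ⟨h.mono n.le_succ, ?_⟩⟩
  · have := (isSecStr_one_iff.mp h).1 p hp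
    have := hfree p hp
    omega
  · intro p hp
    have := (isSecStr_one_iff.mp h).1 p hp
    omega

theorem filter_secStrs_paired :
    (secStrs lam 1 (n + 1)).filter (fun M => ¬ ∀ p ∈ M, p.2 ≠ n + 1) =
      (range (n + 1 - lam)).biUnion
        fun i => (secStrs lam 1 (n + 1)).filter ((i + 1, n + 1) ∈ ·) := by
  ext M
  simp only [mem_filter, mem_biUnion, mem_range, mem_secStrs, not_forall, not_not]
  constructor
  · rintro ⟨h, p, hp, hpn⟩
    have := (isSecStr_one_iff.mp h).1 p hp
    refine ⟨p.1 - 1, by omega, h, ?_⟩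
    convert hp using 1
    ext <;> simp only <;> omega
  · rintro ⟨i, -, h, ha⟩
    exact ⟨h, _, ha, rfl⟩

theorem card_secStrs_succ (hlam : 1 ≤ lam) :
    (secStrs lam 1 (n + 1)).card = (secStrs lam 1 n).card +
      ∑ i ∈ range (n + 1 - lam), (secStrs lam 1 i).card * (secStrs lam 1 (n - 1 - i)).card := by
  rw [← card_filter_add_card_filter_not (fun M => ∀ p ∈ M, p.2 ≠ n + 1), filter_secStrs_unpaired,
    filter_secStrs_paired, card_biUnion]
  · refine congrArg _ (sum_congr rfl fun i hi => card_filter_mem_secStrs ?_ ?_) <;>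
      rw [mem_range] at hi <;> omega
  · intro i hi j hj hij
    refine disjoint_left.mpr fun M hiM hjM => hij ?_
    rw [mem_filter, mem_secStrs, isSecStr_one_iff] at hiM hjM
    rw [mem_coe, mem_range] at hi hj
    have := hiM.1.2 _ hiM.2 _ hjM.2
    simp only [ArcsCompatible, Prod.ext_iff] at this
    omega

end Counting

theorem numStr_zero {lam r : ℕ} : numStr lam r 0 = 1 := by
  rw [numStr_eq_card_secStrs, secStrs_zero, card_singleton]

theorem numStr_succ {lam n : ℕ} (hlam : 1 ≤ lam) :
    numStr lam 1 (n + 1) = numStr lam 1 n +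
      ∑ i ∈ range (n + 1 - lam), numStr lam 1 i * numStr lam 1 (n - 1 - i) := by
  simp only [numStr_eq_card_secStrs]
  exact card_secStrs_succ hlam

theorem numStr_two_one_add_two (m : ℕ) :
    numStr 2 1 (m + 2) + numStr 2 1 m =
      numStr 2 1 (m + 1) + ∑ p ∈ antidiagonal m, numStr 2 1 p.1 * numStr 2 1 p.2 := by
  rw [numStr_succ one_le_two, Nat.sum_antidiagonal_eq_sum_range_succ_mk, sum_range_succ,
    Nat.sub_self, numStr_zero, mul_one, add_assoc]
  -- `m + 1 + 1 - 2` and `m + 1 - 1 - i` reduce to `m` and `m - i`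
  rfl

open PowerSeries in
theorem PowerSeries.mk_quadratic_eq_zero {R : Type*} [CommRing R] {a : ℕ → R}
    (h0 : a 0 = 1) (h1 : a 1 = 1)
    (hrec : ∀ m, a (m + 2) + a m = a (m + 1) + ∑ p ∈ antidiagonal m, a p.1 * a p.2) :
    X ^ 2 * mk a ^ 2 - (1 - X + X ^ 2) * mk a + 1 = 0 := by
  have hexp : X ^ 2 * mk a ^ 2 - (1 - X + X ^ 2) * mk a + 1 =
      X ^ 2 * (mk a * mk a) - (mk a - X ^ 1 * mk a + X ^ 2 * mk a) + 1 := by ring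
  ext (_ | _ | m)
  all_goals simp only [hexp, map_add, map_sub, coeff_X_pow_mul', coeff_mk, coeff_one, map_zero]
  · simp [h0]
  · simp [h0, h1]
  · simp only [coeff_mul, coeff_mk, le_add_iff_nonneg_left, zero_le, ↓reduceIte, Nat.reduceSubDiff,
      add_tsub_cancel_right, Nat.add_eq_zero_iff, one_ne_zero, and_false, add_zero]
    linear_combination (hrec m).symm

open PowerSeries in
/-- Functional equation for the generating function of secondary structures
with minimum arc-length 2 and minimum stack-length 1:
`x²S(x)² − (1−x+x²)S(x) + 1 = 0`. -/
theorem secondary_structure_functional_equation :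
    (PowerSeries.X : PowerSeries ℚ) ^ 2 * (PowerSeries.mk fun n => (numStr 2 1 n : ℚ)) ^ 2
      - (1 - PowerSeries.X + PowerSeries.X ^ 2) * (PowerSeries.mk fun n => (numStr 2 1 n : ℚ))
      + 1 = 0 := by
  have h0 : numStr 2 1 0 = 1 := numStr_zero
  have h1 : numStr 2 1 1 = 1 := by simpa [h0] using numStr_succ (lam := 2) (n := 0) one_le_two
  refine PowerSeries.mk_quadratic_eq_zero (by exact_mod_cast h0) (by exact_mod_cast h1) fun m => ?_
  exact_mod_cast numStr_two_one_add_two m
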